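/- Let $0 < \alpha \le 1$, $\beta \ge 1$, and let $w \in A_1$. Then for every $f \in L^2_w(\mathbb{R}^n)$, the varying-aperture intrinsic square function satisfies $\|S_{\alpha,\beta}(f)\|_{L^2_w}^2 \le C \beta^n \|S_\alpha(f)\|_{L^2_w}^2$, where $C$ depends only on $n$ and the $A_1$ constant of $w$. -/

import Mathlib

/-!
Integrating `S_{α,β}(f)² w` and applying Tonelli turns the weighted norm into
`∫∫ A_α(f)(y,t)² w(B(y,βt)) dy dt / t^{n+1}`. The `A₁` condition on the cube of side `2βt`
around `y` gives the doubling bound `w(B(y,βt)) ≤ C βⁿ w(B(y,t))`, and Tonelli in reverse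
yields the claim. Tonelli needs `(y,t) ↦ A_α(f)(y,t)` to be measurable: it is lower
semicontinuous on `t > 0`, as a supremum of the continuous functions `|f * φ_t(y)|`, once `f` is
locally integrable. That holds for `f ∈ L²_w` because an `A₁` weight which is not a.e. zero is
bounded below by a positive constant on every ball.
-/

open MeasureTheory Set Metric ENNReal

noncomputable section

/-- The axis-parallel cube centered at `x0` with side length `r`. -/
def cube (n : ℕ) (x0 : EuclideanSpace ℝ (Fin n)) (r : ℝ) : Set (EuclideanSpace ℝ (Fin n)) :=
  {x | ∀ i, |x i - x0 i| ≤ r / 2}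

/-- The weighted measure `w(E) = ∫_E w`. -/
def wm (n : ℕ) (w : EuclideanSpace ℝ (Fin n) → ℝ) (s : Set (EuclideanSpace ℝ (Fin n))) : ℝ≥0∞ :=
  ∫⁻ x in s, ENNReal.ofReal (w x)

/-- The intrinsic Hölder class 𝒞_α. -/
def holderClass (n : ℕ) (α : ℝ) : Set (EuclideanSpace ℝ (Fin n) → ℝ) :=
  {φ | Function.support φ ⊆ closedBall 0 1 ∧ (∫ x, φ x = 0) ∧
    ∀ x x', |φ x - φ x'| ≤ ‖x - x'‖ ^ α}

/-- `f * φ_t (x)` where `φ_t(x) = t^{-n} φ(x/t)`. -/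
def convDil (n : ℕ) (f φ : EuclideanSpace ℝ (Fin n) → ℝ) (t : ℝ) (x : EuclideanSpace ℝ (Fin n)) : ℝ :=
  ∫ y, f y * ((t ^ n)⁻¹ * φ (t⁻¹ • (x - y)))

/-- `A_α(f)(y,t) = sup_{φ ∈ 𝒞_α} |f * φ_t(y)|`. -/
def intA (n : ℕ) (α : ℝ) (f : EuclideanSpace ℝ (Fin n) → ℝ) (y : EuclideanSpace ℝ (Fin n)) (t : ℝ) : ℝ≥0∞ :=
  ⨆ φ ∈ holderClass n α, ENNReal.ofReal |convDil n f φ t y|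

/-- The intrinsic Littlewood–Paley g-function. -/
def gFun (n : ℕ) (α : ℝ) (f : EuclideanSpace ℝ (Fin n) → ℝ) (x : EuclideanSpace ℝ (Fin n)) : ℝ≥0∞ :=
  (∫⁻ t in Ioi (0 : ℝ), (intA n α f x t) ^ 2 * (ENNReal.ofReal t)⁻¹) ^ (1/2 : ℝ)

/-- The varying-aperture intrinsic square function `S_{α,β}`. -/
def sFun (n : ℕ) (α β : ℝ) (f : EuclideanSpace ℝ (Fin n) → ℝ) (x : EuclideanSpace ℝ (Fin n)) : ℝ≥0∞ :=
  (∫⁻ t in Ioi (0 : ℝ), ∫⁻ y in ball x (β * t),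
      (intA n α f y t) ^ 2 * (ENNReal.ofReal (t ^ (n + 1)))⁻¹) ^ (1/2 : ℝ)

/-- The intrinsic `g^*_λ` function. -/
def gStar (n : ℕ) (α lam : ℝ) (f : EuclideanSpace ℝ (Fin n) → ℝ) (x : EuclideanSpace ℝ (Fin n)) : ℝ≥0∞ :=
  (∫⁻ t in Ioi (0 : ℝ), ∫⁻ y,
      (ENNReal.ofReal (t / (t + ‖x - y‖))) ^ (lam * n) *
        (intA n α f y t) ^ 2 * (ENNReal.ofReal (t ^ (n + 1)))⁻¹) ^ (1/2 : ℝ)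

/-- The `A_1` condition with constant `A`. -/
def isA1 (n : ℕ) (w : EuclideanSpace ℝ (Fin n) → ℝ) (A : ℝ) : Prop :=
  ∀ (x0 : EuclideanSpace ℝ (Fin n)) (r : ℝ), 0 < r →
    (∫ x in cube n x0 r, w x) ≤ A * r ^ n * essInf w (volume.restrict (cube n x0 r))

/-- The `A_q` condition, `q > 1`, with constant `A`. -/
def isAq (n : ℕ) (w : EuclideanSpace ℝ (Fin n) → ℝ) (q A : ℝ) : Prop :=
  ∀ (x0 : EuclideanSpace ℝ (Fin n)) (r : ℝ), 0 < r →
    ((r ^ n)⁻¹ * ∫ x in cube n x0 r, w x) *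
      ((r ^ n)⁻¹ * ∫ x in cube n x0 r, (w x) ^ (-(1 / (q - 1)) : ℝ)) ^ (q - 1) ≤ A

end

open Function Filter

-- `essInf` on `ℝ` is a `sSup`, which is `0` on unbounded sets, so no integrability is needed.
theorem essInf_nonneg_of_nonneg {X : Type*} [MeasurableSpace X] {μ : Measure X} {f : X → ℝ}
    (hf : ∀ x, 0 ≤ f x) : 0 ≤ essInf f μ := by
  rw [essInf_eq_sSup]
  exact Real.sSup_nonneg' ⟨0, by simp [not_lt.2 (hf _)], le_rfl⟩

theorem smul_restrict_le_withDensity {X : Type*} [MeasurableSpace X] {μ : Measure X} {s : Set X}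
    (hs : MeasurableSet s) {ρ : X → ℝ≥0∞} {m : ℝ≥0∞} (h : ∀ᵐ x ∂μ.restrict s, m ≤ ρ x) :
    m • μ.restrict s ≤ μ.withDensity ρ :=
  calc m • μ.restrict s = (μ.restrict s).withDensity fun _ => m := (withDensity_const m).symm
    _ ≤ (μ.restrict s).withDensity ρ := withDensity_mono h
    _ = (μ.withDensity ρ).restrict s := (restrict_withDensity hs ρ).symm
    _ ≤ μ.withDensity ρ := Measure.restrict_le_self

theorem exists_nat_not_ae_eq_restrict_ball {X β : Type*} [PseudoMetricSpace X]
    [MeasurableSpace X] {μ : Measure X} {f g : X → β} (h : ¬ f =ᵐ[μ] g) (x : X) :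
    ∃ k : ℕ, ¬ f =ᵐ[μ.restrict (ball x k)] g := by
  by_contra! hk
  refine h ?_
  rw [← Measure.restrict_univ (μ := μ), ← iUnion_ball_nat x]
  exact (ae_restrict_iUnion_iff _ _).2 hk

theorem ContinuousOn.lowerSemicontinuous_indicator {X : Type*} [TopologicalSpace X] {s : Set X}
    {f : X → ℝ≥0∞} (hf : ContinuousOn f s) (hs : IsOpen s) :
    LowerSemicontinuous (s.indicator f) := by
  intro x
  by_cases hx : x ∈ s
  · refine ((hf.continuousAt (hs.mem_nhds hx)).congr ?_).lowerSemicontinuousAt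
    filter_upwards [hs.mem_nhds hx] with y hy
    rw [indicator_of_mem hy]
  · intro y hy
    simp [indicator_of_notMem hx] at hy

section BallSwap

variable {X T : Type*} [PseudoMetricSpace X] [MeasurableSpace X] [OpensMeasurableSpace X]
  [SecondCountableTopology X] {μ : Measure X} [SFinite μ] [MeasurableSpace T]

theorem lintegral_setLIntegral_ball_mul {F v : X → ℝ≥0∞} (hF : Measurable F) (hv : Measurable v)
    (r : ℝ) :
    ∫⁻ x, (∫⁻ y in ball x r, F y ∂μ) * v x ∂μ = ∫⁻ y, F y * ∫⁻ x in ball y r, v x ∂μ ∂μ := by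
  have hE : MeasurableSet {q : X × X | dist q.2 q.1 < r} :=
    measurableSet_lt (measurable_snd.dist measurable_fst) measurable_const
  have hmeas : Measurable fun q : X × X => (ball q.1 r).indicator F q.2 * v q.1 :=
    ((hF.comp measurable_snd).indicator hE).mul (hv.comp measurable_fst)
  calc ∫⁻ x, (∫⁻ y in ball x r, F y ∂μ) * v x ∂μ
      = ∫⁻ x, ∫⁻ y, (ball x r).indicator F y * v x ∂μ ∂μ := by
        refine lintegral_congr fun x => ?_
        rw [← lintegral_indicator measurableSet_ball,
          lintegral_mul_const _ (hF.indicator measurableSet_ball)]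
    _ = ∫⁻ y, ∫⁻ x, (ball x r).indicator F y * v x ∂μ ∂μ :=
        lintegral_lintegral_swap hmeas.aemeasurable
    _ = ∫⁻ y, ∫⁻ x, F y * (ball y r).indicator v x ∂μ ∂μ := by
        refine lintegral_congr fun y => lintegral_congr fun x => ?_
        by_cases h : y ∈ ball x r
        · rw [indicator_of_mem h, indicator_of_mem (mem_ball_comm.1 h)]
        · rw [indicator_of_notMem h, indicator_of_notMem (mt mem_ball_comm.1 h), zero_mul,
            mul_zero]
    _ = ∫⁻ y, F y * ∫⁻ x in ball y r, v x ∂μ ∂μ := by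
        refine lintegral_congr fun y => ?_
        rw [lintegral_const_mul _ (hv.indicator measurableSet_ball),
          lintegral_indicator measurableSet_ball]

theorem measurable_setLIntegral_ball {ρ : T → ℝ} (hρ : Measurable ρ) {Φ : T × X → ℝ≥0∞}
    (hΦ : Measurable Φ) : Measurable fun p : X × T => ∫⁻ y in ball p.1 (ρ p.2), Φ (p.2, y) ∂μ := by
  have hE : MeasurableSet {q : (X × T) × X | dist q.2 q.1.1 < ρ q.1.2} :=
    measurableSet_lt (measurable_snd.dist measurable_fst.fst) (hρ.comp measurable_fst.snd)
  have hmeas : Measurable fun q : (X × T) × X => (ball q.1.1 (ρ q.1.2)).indicator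
      (fun y => Φ (q.1.2, y)) q.2 :=
    (hΦ.comp (measurable_fst.snd.prodMk measurable_snd)).indicator hE
  simpa only [lintegral_indicator measurableSet_ball] using hmeas.lintegral_prod_right'

theorem lintegral_lintegral_ball_mul (ν : Measure T) [SFinite ν] {ρ : T → ℝ} (hρ : Measurable ρ)
    {Φ : T × X → ℝ≥0∞} (hΦ : Measurable Φ) {v : X → ℝ≥0∞} (hv : AEMeasurable v μ) :
    ∫⁻ x, (∫⁻ t, ∫⁻ y in ball x (ρ t), Φ (t, y) ∂μ ∂ν) * v x ∂μ
      = ∫⁻ t, ∫⁻ y, Φ (t, y) * ∫⁻ x in ball y (ρ t), v x ∂μ ∂μ ∂ν := by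
  have hmk (s : Set X) : ∫⁻ x in s, v x ∂μ = ∫⁻ x in s, hv.mk v x ∂μ :=
    lintegral_congr_ae (ae_restrict_of_ae hv.ae_eq_mk)
  simp only [hmk]
  rw [lintegral_congr_ae (hv.ae_eq_mk.mono fun x hx => by rw [hx])]
  have hK := measurable_setLIntegral_ball (μ := μ) hρ hΦ
  calc ∫⁻ x, (∫⁻ t, ∫⁻ y in ball x (ρ t), Φ (t, y) ∂μ ∂ν) * hv.mk v x ∂μ
      = ∫⁻ x, ∫⁻ t, (∫⁻ y in ball x (ρ t), Φ (t, y) ∂μ) * hv.mk v x ∂ν ∂μ :=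
        lintegral_congr fun x =>
          (lintegral_mul_const _ (hK.comp (measurable_const.prodMk measurable_id))).symm
    _ = ∫⁻ t, ∫⁻ x, (∫⁻ y in ball x (ρ t), Φ (t, y) ∂μ) * hv.mk v x ∂μ ∂ν :=
        lintegral_lintegral_swap (hK.mul (hv.measurable_mk.comp measurable_fst)).aemeasurable
    _ = _ := lintegral_congr fun t =>
        lintegral_setLIntegral_ball_mul (hΦ.comp measurable_prodMk_left) hv.measurable_mk (ρ t)

end BallSwap

section Euclidean

variable {n : ℕ}

local notation "ℝⁿ" => EuclideanSpace ℝ (Fin n)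

theorem ball_subset_cube {y : ℝⁿ} {s r : ℝ} (h : s ≤ r / 2) : ball y s ⊆ cube n y r :=
  fun x hx i => ((PiLp.dist_apply_le x y i).trans_lt (mem_ball.1 hx)).le.trans h

theorem cube_subset_closedBall (y : ℝⁿ) {r : ℝ} (hr : 0 ≤ r) :
    cube n y r ⊆ closedBall y (√n * r) := by
  intro x hx
  rw [mem_closedBall, EuclideanSpace.dist_eq, ← Real.sqrt_sq hr,
    ← Real.sqrt_mul (Nat.cast_nonneg n)]
  refine Real.sqrt_le_sqrt ?_
  calc ∑ i, dist (x i) (y i) ^ 2 ≤ ∑ _i : Fin n, r ^ 2 := Finset.sum_le_sum fun i _ => by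
        rw [Real.dist_eq, sq_le_sq, abs_abs, abs_of_nonneg hr]
        linarith [hx i]
    _ = n * r ^ 2 := by simp

theorem integrableOn_cube {w : ℝⁿ → ℝ} (hloc : LocallyIntegrable w volume) (y : ℝⁿ) {r : ℝ}
    (hr : 0 ≤ r) : IntegrableOn w (cube n y r) volume :=
  (hloc.integrableOn_isCompact (isCompact_closedBall _ _)).mono_set (cube_subset_closedBall y hr)

theorem holderWith_of_abs_sub_le {α : ℝ} (hα : 0 ≤ α) {φ : ℝⁿ → ℝ}
    (h : ∀ x x', |φ x - φ x'| ≤ ‖x - x'‖ ^ α) : HolderWith 1 α.toNNReal φ := by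
  intro x y
  rw [edist_dist, edist_dist, ENNReal.coe_one, one_mul, Real.coe_toNNReal α hα,
    ENNReal.ofReal_rpow_of_nonneg dist_nonneg hα, Real.dist_eq, dist_eq_norm]
  exact ENNReal.ofReal_le_ofReal (h x y)

theorem continuousOn_convDil {f φ : ℝⁿ → ℝ} (hf : LocallyIntegrable f volume)
    (hφ : Continuous φ) (hsupp : support φ ⊆ closedBall 0 1) :
    ContinuousOn (fun p : ℝ × ℝⁿ => convDil n f φ p.1 p.2) (Ioi 0 ×ˢ univ) := by
  have hopen : IsOpen (Ioi (0 : ℝ) ×ˢ (univ : Set ℝⁿ)) := isOpen_Ioi.prod isOpen_univ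
  refine hopen.continuousOn_iff.2 ?_
  rintro ⟨t₀, y₀⟩ ⟨ht₀ : 0 < t₀, -⟩
  have hlocal := continuousOn_convolution_right_with_param (ContinuousLinearMap.lsmul ℝ ℝ)
    (g := fun (t : ℝ) (z : ℝⁿ) => (t ^ n)⁻¹ * φ (t⁻¹ • z)) (s := Ioo (t₀ / 2) (2 * t₀))
    (isCompact_closedBall (0 : ℝⁿ) (2 * t₀)) ?_ hf ?_
  · refine (hlocal (t₀, y₀) ⟨⟨by linarith, by linarith⟩, trivial⟩).continuousAt ?_
    exact prod_mem_nhds (Ioo_mem_nhds (by linarith) (by linarith)) univ_mem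
  · intro t z ht hz
    have ht0 : 0 < t := by linarith [ht.1]
    rw [mem_closedBall_zero_iff, not_le] at hz
    suffices φ (t⁻¹ • z) = 0 by simp [this]
    refine notMem_support.1 fun h => ?_
    have h1 := mem_closedBall_zero_iff.1 (hsupp h)
    rw [norm_smul, Real.norm_of_nonneg (inv_nonneg.2 ht0.le), inv_mul_le_iff₀ ht0] at h1
    linarith [ht.2]
  · rintro ⟨t, z⟩ ⟨ht, -⟩
    have ht0 : t ≠ 0 := by linarith [ht.1]
    exact ((continuousAt_fst.pow n).inv₀ (pow_ne_zero n ht0)).mul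
      (hφ.continuousAt.comp ((continuousAt_fst.inv₀ ht0).smul continuousAt_snd))
      |>.continuousWithinAt

theorem lowerSemicontinuous_indicator_intA {α : ℝ} (hα : 0 < α) {f : ℝⁿ → ℝ}
    (hf : LocallyIntegrable f volume) :
    LowerSemicontinuous ((Ioi 0 ×ˢ univ).indicator fun p : ℝ × ℝⁿ => intA n α f p.2 p.1) := by
  have hsup : ((Ioi 0 ×ˢ univ).indicator fun p : ℝ × ℝⁿ => intA n α f p.2 p.1) =
      fun p => ⨆ φ ∈ holderClass n α, (Ioi 0 ×ˢ univ).indicator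
        (fun p : ℝ × ℝⁿ => ENNReal.ofReal |convDil n f φ p.1 p.2|) p := by
    ext p
    by_cases hp : p ∈ Ioi 0 ×ˢ univ
    · simp only [indicator_of_mem hp, intA]
    · simp only [indicator_of_notMem hp, iSup_zero]
  rw [hsup]
  refine lowerSemicontinuous_biSup fun φ hφ => ?_
  obtain ⟨hsupp, -, hholder⟩ := hφ
  have hφ : Continuous φ :=
    (holderWith_of_abs_sub_le hα.le hholder).continuous (Real.toNNReal_pos.2 hα)
  exact (ENNReal.continuous_ofReal.comp_continuousOn (continuousOn_convDil hf hφ hsupp).abs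
    ).lowerSemicontinuous_indicator (isOpen_Ioi.prod isOpen_univ)

variable {w : EuclideanSpace ℝ (Fin n) → ℝ} {A : ℝ}

theorem isA1.mul_volume_le (hA : isA1 n w A) (hw : ∀ x, 0 ≤ w x)
    (hloc : LocallyIntegrable w volume) {y : ℝⁿ} {r : ℝ} (hr : 0 < r) {s : Set ℝⁿ}
    (hs : s ⊆ cube n y r) :
    wm n w (cube n y r) * volume s ≤ ENNReal.ofReal (A * r ^ n) * wm n w s := by
  set m := essInf w (volume.restrict (cube n y r))
  have hQ : wm n w (cube n y r) ≤ ENNReal.ofReal (A * r ^ n) * ENNReal.ofReal m := by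
    rw [← ENNReal.ofReal_mul' (essInf_nonneg_of_nonneg hw), wm,
      ← ofReal_integral_eq_lintegral_ofReal (integrableOn_cube hloc y hr.le) (ae_of_all _ hw)]
    exact ENNReal.ofReal_le_ofReal (hA y r hr)
  have hms : ENNReal.ofReal m * volume s ≤ wm n w s := by
    rw [← setLIntegral_const]
    exact lintegral_mono_ae ((ae_restrict_of_ae_restrict_of_subset hs
      (ae_essInf_le (isBoundedUnder_of ⟨0, hw⟩))).mono fun x hx => ENNReal.ofReal_le_ofReal hx)
  calc wm n w (cube n y r) * volume s
      ≤ ENNReal.ofReal (A * r ^ n) * ENNReal.ofReal m * volume s := by gcongr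
    _ ≤ ENNReal.ofReal (A * r ^ n) * wm n w s := by rw [mul_assoc]; gcongr

theorem isA1.wm_ball_le (hA : isA1 n w A) (hw : ∀ x, 0 ≤ w x)
    (hloc : LocallyIntegrable w volume) (y : ℝⁿ) {b t : ℝ} (hb : 1 ≤ b) (ht : 0 < t) :
    wm n w (ball y (b * t)) ≤
      ENNReal.ofReal (A * 2 ^ n / (volume (ball (0 : ℝⁿ) 1)).toReal * b ^ n) *
        wm n w (ball y t) := by
  set V := volume (ball (0 : ℝⁿ) 1)
  have hV : 0 < V.toReal := ENNReal.toReal_pos (measure_ball_pos _ _ one_pos).ne'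
    measure_ball_lt_top.ne
  have hvol : volume (ball y t) = ENNReal.ofReal (t ^ n * V.toReal) := by
    rw [Measure.addHaar_ball_of_pos _ _ ht, finrank_euclideanSpace_fin,
      ENNReal.ofReal_mul (by positivity), ENNReal.ofReal_toReal measure_ball_lt_top.ne]
  have hconst : ENNReal.ofReal (A * (2 * (b * t)) ^ n) =
      ENNReal.ofReal (A * 2 ^ n / V.toReal * b ^ n) * volume (ball y t) := by
    rw [hvol, ← ENNReal.ofReal_mul' (by positivity)]
    congr 1
    field_simp
    ring
  have hbt : t ≤ 2 * (b * t) / 2 := by nlinarith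
  rw [← ENNReal.mul_le_mul_iff_left (measure_ball_pos volume y ht).ne'
    (measure_ball_lt_top (μ := volume)).ne]
  calc wm n w (ball y (b * t)) * volume (ball y t)
      ≤ wm n w (cube n y (2 * (b * t))) * volume (ball y t) := by
        gcongr
        exact lintegral_mono_set (ball_subset_cube (by linarith))
    _ ≤ ENNReal.ofReal (A * (2 * (b * t)) ^ n) * wm n w (ball y t) :=
        hA.mul_volume_le hw hloc (by positivity) (ball_subset_cube hbt)
    _ = _ := by rw [hconst]; ring

theorem isA1.essInf_pos (hA : isA1 n w A) (hw : ∀ x, 0 ≤ w x)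
    (hloc : LocallyIntegrable w volume) {y : ℝⁿ} {r : ℝ} (hr : 0 < r)
    (hw0 : ¬ w =ᵐ[volume.restrict (cube n y r)] 0) :
    0 < essInf w (volume.restrict (cube n y r)) := by
  refine (essInf_nonneg_of_nonneg hw).lt_of_ne fun h => hw0 ?_
  refine (integral_eq_zero_iff_of_nonneg hw (integrableOn_cube hloc y hr.le)).1 ?_
  refine le_antisymm ?_ (setIntegral_nonneg_of_ae (ae_of_all _ hw))
  simpa [← h] using hA y r hr

theorem isA1.exists_pos_ae_le (hA : isA1 n w A) (hw : ∀ x, 0 ≤ w x)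
    (hloc : LocallyIntegrable w volume) (hw0 : ¬ w =ᵐ[volume] 0) (R : ℝ) :
    ∃ m > 0, ∀ᵐ x ∂volume.restrict (ball 0 R), m ≤ w x := by
  obtain ⟨k, hk⟩ := exists_nat_not_ae_eq_restrict_ball hw0 0
  set L := 2 * (k + |R| + 1) with hL_def
  have hL : 0 < L := by positivity
  have hQ : ¬ w =ᵐ[volume.restrict (cube n 0 L)] 0 := fun h =>
    hk (ae_restrict_of_ae_restrict_of_subset (ball_subset_cube (by linarith [abs_nonneg R])) h)
  refine ⟨_, hA.essInf_pos hw hloc hL hQ, ae_restrict_of_ae_restrict_of_subset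
    (ball_subset_cube ?_) (ae_essInf_le (isBoundedUnder_of ⟨0, hw⟩))⟩
  linarith [le_abs_self R, (Nat.cast_nonneg k : (0 : ℝ) ≤ k)]

theorem isA1.locallyIntegrable_of_memLp (hA : isA1 n w A) (hw : ∀ x, 0 ≤ w x)
    (hloc : LocallyIntegrable w volume) (hw0 : ¬ w =ᵐ[volume] 0) {f : ℝⁿ → ℝ}
    (hf : MemLp f 2 (volume.withDensity fun x => ENNReal.ofReal (w x))) :
    LocallyIntegrable f volume := by
  refine locallyIntegrable_iff.2 fun K hK => ?_
  obtain ⟨R, hKR⟩ := hK.isBounded.subset_ball 0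
  obtain ⟨m, hm, hmw⟩ := hA.exists_pos_ae_le hw hloc hw0 R
  have hle := smul_restrict_le_withDensity measurableSet_ball
    (hmw.mono fun x hx => ENNReal.ofReal_le_ofReal hx)
  have hm0 : ENNReal.ofReal m ≠ 0 := (ENNReal.ofReal_pos.2 hm).ne'
  have hle' : volume.restrict (ball 0 R) ≤
      (ENNReal.ofReal m)⁻¹ • volume.withDensity fun x => ENNReal.ofReal (w x) := by
    calc volume.restrict (ball 0 R)
        = (ENNReal.ofReal m)⁻¹ • ENNReal.ofReal m • volume.restrict (ball (0 : ℝⁿ) R) := by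
          rw [smul_smul, ENNReal.inv_mul_cancel hm0 ENNReal.ofReal_ne_top, one_smul]
      _ ≤ _ := by gcongr
  have : IsFiniteMeasure (volume.restrict (ball (0 : ℝⁿ) R)) :=
    isFiniteMeasure_restrict.2 measure_ball_lt_top.ne
  exact IntegrableOn.mono_set
    ((hf.of_measure_le_smul (ENNReal.inv_ne_top.2 hm0) hle').integrable one_le_two) hKR

theorem lintegral_sFun_sq_mul {α : ℝ} (hα : 0 < α) {f : ℝⁿ → ℝ}
    (hf : LocallyIntegrable f volume) (hw : AEMeasurable w volume) (b : ℝ) :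
    ∫⁻ x, sFun n α b f x ^ 2 * ENNReal.ofReal (w x) =
      ∫⁻ t in Ioi 0, ∫⁻ y, intA n α f y t ^ 2 * (ENNReal.ofReal (t ^ (n + 1)))⁻¹ *
        wm n w (ball y (b * t)) := by
  set F := (Ioi 0 ×ˢ univ).indicator fun p : ℝ × ℝⁿ => intA n α f p.2 p.1
  set Φ : ℝ × ℝⁿ → ℝ≥0∞ := fun p => F p ^ 2 * (ENNReal.ofReal (p.1 ^ (n + 1)))⁻¹
  have hΦ : Measurable Φ :=
    ((lowerSemicontinuous_indicator_intA hα hf).measurable.pow_const 2).mul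
      (ENNReal.measurable_ofReal.comp (measurable_fst.pow_const _)).inv
  have hΦ_eq {t : ℝ} (ht : t ∈ Ioi 0) (y : ℝⁿ) :
      Φ (t, y) = intA n α f y t ^ 2 * (ENNReal.ofReal (t ^ (n + 1)))⁻¹ := by
    simp only [Φ, F, indicator_of_mem (mk_mem_prod ht (mem_univ y))]
  have hsq (x : ℝⁿ) :
      sFun n α b f x ^ 2 = ∫⁻ t in Ioi 0, ∫⁻ y in ball x (b * t), Φ (t, y) := by
    rw [sFun, ← ENNReal.rpow_natCast, ← ENNReal.rpow_mul,
      show (1 / 2 : ℝ) * (2 : ℕ) = 1 by norm_num, ENNReal.rpow_one]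
    exact setLIntegral_congr_fun measurableSet_Ioi fun t ht => by simp only [hΦ_eq ht]
  simp only [hsq]
  rw [lintegral_lintegral_ball_mul _ (ρ := (b * ·)) (by fun_prop) hΦ hw.ennreal_ofReal]
  exact setLIntegral_congr_fun measurableSet_Ioi fun t ht => by simp only [hΦ_eq ht, wm]

end Euclidean

theorem sFun_aperture_L2_general (n : ℕ) (α : ℝ) (hα0 : 0 < α)
    (β : ℝ) (hβ : 1 ≤ β)
    (w : EuclideanSpace ℝ (Fin n) → ℝ) (hw : ∀ x, 0 ≤ w x)
    (hloc : MeasureTheory.LocallyIntegrable w volume) (A : ℝ) (hA : isA1 n w A) :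
    ∃ C > 0, ∀ f : EuclideanSpace ℝ (Fin n) → ℝ,
      MeasureTheory.MemLp f 2 (volume.withDensity fun x => ENNReal.ofReal (w x)) →
      (∫⁻ x, (sFun n α β f x) ^ 2 * ENNReal.ofReal (w x)) ≤
        ENNReal.ofReal (C * β ^ n) * ∫⁻ x, (sFun n α 1 f x) ^ 2 * ENNReal.ofReal (w x) := by
  set V := (volume (ball (0 : EuclideanSpace ℝ (Fin n)) 1)).toReal
  have hV : 0 < V := ENNReal.toReal_pos (measure_ball_pos _ _ one_pos).ne' measure_ball_lt_top.ne
  refine ⟨max A 1 * 2 ^ n / V, by positivity, fun f hf => ?_⟩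
  by_cases hw0 : w =ᵐ[volume] 0
  · calc _ = ∫⁻ _, 0 := lintegral_congr_ae (hw0.mono fun x hx => by simp [hx])
      _ ≤ _ := by rw [lintegral_zero]; exact zero_le
  have hf_loc := hA.locallyIntegrable_of_memLp hw hloc hw0 hf
  have hw_meas := hloc.aestronglyMeasurable.aemeasurable
  rw [lintegral_sFun_sq_mul hα0 hf_loc hw_meas, lintegral_sFun_sq_mul hα0 hf_loc hw_meas,
    ← lintegral_const_mul' _ _ ENNReal.ofReal_ne_top]
  refine setLIntegral_mono' measurableSet_Ioi fun t ht => ?_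
  rw [← lintegral_const_mul' _ _ ENNReal.ofReal_ne_top]
  refine lintegral_mono fun y => ?_
  rw [one_mul, mul_left_comm]
  gcongr
  refine (hA.wm_ball_le hw hloc y hβ ht).trans ?_
  gcongr
  exact le_max_left A 1

/-- Aperture comparison: `‖S_{α,β} f‖²_{L²_w} ≤ C βⁿ ‖S_α f‖²_{L²_w}` for `w ∈ A₁`. -/
theorem sFun_aperture_L2 (n : ℕ) (hn : 1 ≤ n) (α : ℝ) (hα0 : 0 < α) (hα1 : α ≤ 1)
    (β : ℝ) (hβ : 1 ≤ β)
    (w : EuclideanSpace ℝ (Fin n) → ℝ) (hw : ∀ x, 0 ≤ w x)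
    (hloc : MeasureTheory.LocallyIntegrable w volume) (A : ℝ) (hA : isA1 n w A) :
    ∃ C > 0, ∀ f : EuclideanSpace ℝ (Fin n) → ℝ,
      MeasureTheory.MemLp f 2 (volume.withDensity fun x => ENNReal.ofReal (w x)) →
      (∫⁻ x, (sFun n α β f x) ^ 2 * ENNReal.ofReal (w x)) ≤
        ENNReal.ofReal (C * β ^ n) * ∫⁻ x, (sFun n α 1 f x) ^ 2 * ENNReal.ofReal (w x) :=
  sFun_aperture_L2_general n α hα0 β hβ w hw hloc A hA
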